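/- arXiv:1504.05739 — 2 statements merged into one kernel-verified Lean document; each statement's English description precedes it below -/
import Mathlib

section
/- Let M = (S, P, μ) be a Markov chain with a reward function r : S → [0,1], and for a BSCC C let MP_C denote the mean payoff of runs ending in C. Let C be the (random) candidate for which the algorithm SinglePathMP terminates and M̂P_C its returned estimate, and let δ_BSCC, δ_C, ε > 0. If ℙ[C ∉ BSCC] ≤ δ_BSCC and ℙ[|M̂P_C − MP_C| > ε | C ∈ BSCC] ≤ δ_C, then ℙ[|M̂P_C − MP_C| > ε] ≤ δ_C + δ_BSCC. In particular, with δ_C = δ_BSCC = δ/2, the algorithm SinglePathMP terminates almost surely and its output is within ε of the mean payoff of the BSCC of the generated run with probability at least 1 − δ. -/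
open MeasureTheory
open scoped ENNReal

namespace SMCPaper

/-- A finite-state discrete-time Markov chain `(S, P, μ)`. -/
structure MC (S : Type*) [Fintype S] where
  P : S → S → ℝ
  μ0 : S → ℝ
  P_nonneg : ∀ s s' : S, 0 ≤ P s s'
  P_row : ∀ s : S, ∑ s' : S, P s s' = 1
  μ0_nonneg : ∀ s : S, 0 ≤ μ0 s
  μ0_sum : ∑ s : S, μ0 s = 1

variable {S : Type*} [Fintype S] [DecidableEq S]

/-- The edge relation of the Markov chain: positive transition probability. -/
def edgeRel (M : MC S) (a b : S) : Prop := 0 < M.P a b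

/-- The minimum positive transition probability `p_min`. -/
noncomputable def pmin (M : MC S) : ℝ :=
  sInf {x : ℝ | 0 < x ∧ ∃ s s' : S, M.P s s' = x}

/-- A path of the Markov chain: consecutive states have positive transition probability. -/
def IsMPath (M : MC S) (π : List S) : Prop := List.Chain' (edgeRel M) π

/-- A run of the Markov chain. -/
def IsRun (M : MC S) (ρ : ℕ → S) : Prop := ∀ i, 0 < M.P (ρ i) (ρ (i + 1))

/-- The support of a finite sequence of states. -/
def supp (π : List S) : Set S := {s | s ∈ π}

/-- The edge relation of the graph of a finite sequence of states. -/
def listEdge (π : List S) (a b : S) : Prop :=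
  ∃ i, π[i]? = some a ∧ π[i + 1]? = some b

/-- A nonempty set `C` is strongly connected w.r.t. the edge relation `E`
if every state of `C` can reach every other state of `C`. -/
def IsSC (E : S → S → Prop) (C : Set S) : Prop :=
  C.Nonempty ∧ ∀ s ∈ C, ∀ s' ∈ C, Relation.ReflTransGen E s s'

/-- A bottom strongly connected component w.r.t. the edge relation `E`:
a maximal strongly connected set with no edges leaving it. -/
def IsBSCCOf (E : S → S → Prop) (C : Set S) : Prop :=
  IsSC E C ∧ (∀ D : Set S, IsSC E D → C ⊆ D → D = C) ∧
    ∀ s ∈ C, ∀ s' : S, E s s' → s' ∈ C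

/-- `C` is the candidate of the path `π`: the support of some suffix `κ` of `π`
which is a BSCC of the graph of `π`. -/
def IsCand (π : List S) (C : Set S) : Prop :=
  ∃ κ : List S, κ <:+ π ∧ supp κ = C ∧ IsBSCCOf (listEdge π) C

/-- `C` is a `k`-candidate of the path `π` (with real-valued strength `k`):
it is the candidate of `π`, witnessed by a suffix `κ` in which every state of `C`
occurs at least `k` times and the last state occurs at least `k+1` times. -/
def IsKCand (k : ℝ) (π : List S) (C : Set S) : Prop :=
  ∃ κ : List S, κ <:+ π ∧ supp κ = C ∧ IsBSCCOf (listEdge π) C ∧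
    (∀ s ∈ C, k ≤ (κ.count s : ℝ)) ∧
    ∀ s : S, κ.getLast? = some s → k + 1 ≤ (κ.count s : ℝ)

/-- The prefix of length `n` of a run. -/
def pre (ρ : ℕ → S) (n : ℕ) : List S := (List.range n).map ρ

/-- The segment `ρ a, ρ (a+1), …, ρ (b-1)` of a run. -/
def seg (ρ : ℕ → S) (a b : ℕ) : List S := (List.range (b - a)).map (fun l => ρ (a + l))

open Classical in
/-- The candidate `K(π)` of a path (`none` encodes `⊥`). -/
noncomputable def candOf (π : List S) : Option (Set S) :=
  if h : ∃ C : Set S, IsCand π C then some h.choose else none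

/-- The sequence `j ↦ K(s₀⋯s_{j-1})` of candidates of the prefixes of a run. -/
noncomputable def candSeqRaw (ρ : ℕ → S) : ℕ → Option (Set S) :=
  fun j => candOf (pre ρ j)

/-- `j` is a change point of `f : ℕ → Option (Set S)`: `f j` is defined and differs from
the closest previously defined value.  The change points enumerate the candidate
sequence `(K_i)_{i≥1}` (obtained by deleting `⊥`s and consecutive repetitions). -/
def isChange (f : ℕ → Option (Set S)) (j : ℕ) : Prop :=
  f j ≠ none ∧
    ∀ j' < j, f j' ≠ none → (∀ l, j' < l → l < j → f l = none) → f j' ≠ f j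

/-- The number of change points `≤ j`. -/
noncomputable def cpCount (f : ℕ → Option (Set S)) (j : ℕ) : ℕ :=
  {l | l ≤ j ∧ isChange f l}.ncard

/-- `j` is the prefix length at which the `i`-th candidate `K_i` (1-indexed) is born;
if there are fewer than `i` candidates, the final candidate is used
(the convention `K_ℓ := K_j` for `ℓ` beyond the last index `j`). -/
def BirthAt (f : ℕ → Option (Set S)) (i j : ℕ) : Prop :=
  (isChange f j ∧ cpCount f j = i) ∨
    ((¬ ∃ l, isChange f l ∧ cpCount f l = i) ∧ isChange f j ∧
      ∀ l, isChange f l → l ≤ j)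

open Classical in
/-- The `i`-th candidate `K_i` of a run (1-indexed; `none` if undefined). -/
noncomputable def runCand (ρ : ℕ → S) (i : ℕ) : Option (Set S) :=
  if h : ∃ j, BirthAt (candSeqRaw ρ) i j then candSeqRaw ρ h.choose else none

/-- The candidate `K_i` of the run `ρ` is observed as a (strong) `k`-candidate within the
first `n` states of `ρ`: counting only from its birth `b_i` on (that is, on the segment
`b_i γ_i` of the run, which stays inside `K_i`), it is a `k`-candidate. -/
def StrongAtTime (ρ : ℕ → S) (i : ℕ) (k : ℝ) (n : ℕ) : Prop :=
  ∃ (C : Set S) (j : ℕ), BirthAt (candSeqRaw ρ) i j ∧ candSeqRaw ρ j = some C ∧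
    j ≤ n ∧ (∀ l, j - 1 ≤ l → l < n → ρ l ∈ C) ∧ IsKCand k (seg ρ (j - 1) n) C

/-- `K_i` is a strong `k`-candidate of the run `ρ`. -/
def StrongKCand (ρ : ℕ → S) (i : ℕ) (k : ℝ) : Prop := ∃ n, StrongAtTime ρ i k n

/-- The cylinder set of all runs extending the path `π`. -/
def Cyl (π : List S) : Set (ℕ → S) := {ρ | ∀ i s, π[i]? = some s → ρ i = s}

/-- Product of the transition probabilities along a path. -/
noncomputable def transProb (M : MC S) : List S → ℝ
  | [] => 1
  | [_] => 1
  | s :: s' :: rest => M.P s s' * transProb M (s' :: rest)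

/-- The probability `μ(s₀)·∏ P(s_{i-1},s_i)` of a path. -/
noncomputable def pathProb (M : MC S) : List S → ℝ
  | [] => 1
  | s :: rest => M.μ0 s * transProb M (s :: rest)

/-- The event `◊G` that a run visits some state of `G`. -/
def Reach (G : Set S) : Set (ℕ → S) := {ρ | ∃ i, ρ i ∈ G}

/-- The first index `i` with `ρ i = s'` (`∞` if none exists). -/
noncomputable def hitTime (s' : S) (ρ : ℕ → S) : ℝ≥0∞ :=
  sInf ((fun n : ℕ => (n : ℝ≥0∞)) '' {n | ρ n = s'})

/-- The first index `n` by which every state of `C` has been visited (`∞` if never). -/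
noncomputable def coverTime (C : Set S) (ρ : ℕ → S) : ℝ≥0∞ :=
  sInf ((fun n : ℕ => (n : ℝ≥0∞)) '' {n | ∀ c ∈ C, ∃ i ≤ n, ρ i = c})

/-- The chain `M` re-started from the Dirac initial distribution at `u`. -/
def MC.start (M : MC S) (u : S) : MC S where
  P := M.P
  μ0 := fun t => if t = u then 1 else 0
  P_nonneg := M.P_nonneg
  P_row := M.P_row
  μ0_nonneg := fun t => by by_cases h : t = u <;> simp [h]
  μ0_sum := by simp

/-- The strength function `k_i(δ) = (i − log₂ δ)/(−log₂(1 − p_min))`. -/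
noncomputable def kfun (M : MC S) (δ : ℝ) (i : ℝ) : ℝ :=
  (i - Real.logb 2 δ) / (-Real.logb 2 (1 - pmin M))

/-- The set of states occurring infinitely often in a run. -/
def infOft (ρ : ℕ → S) : Set S := {s | {i | ρ i = s}.Infinite}

section ConditionalBound

open ProbabilityTheory

variable {Ω : Type*} [MeasurableSpace Ω] (μ : Measure Ω)

-- Unlike `cond_mul_eq_inter`, this needs no measurability: `μ (t ∩ s) ≤ μ.restrict s t` always holds.
theorem measure_inter_le_mul_cond [IsFiniteMeasure μ] (s t : Set Ω) :
    μ (t ∩ s) ≤ μ s * μ[t | s] := by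
  by_cases hs : μ s = 0
  · simpa [hs] using measure_mono_null Set.inter_subset_right hs
  calc μ (t ∩ s) ≤ μ.restrict s t := Measure.le_restrict_apply s t
    _ = μ s * μ[t | s] := by
      rw [ProbabilityTheory.cond, Measure.smul_apply, smul_eq_mul, ← mul_assoc,
        ENNReal.mul_inv_cancel hs (measure_ne_top μ s), one_mul]

theorem measure_le_cond_add_measure_compl [IsProbabilityMeasure μ] (s t : Set Ω) :
    μ t ≤ μ[t | s] + μ sᶜ :=
  calc μ t ≤ μ (t ∩ s) + μ (t \ s) := measure_le_inter_add_sdiff μ t s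
    _ ≤ μ s * μ[t | s] + μ sᶜ := by
      gcongr
      · exact measure_inter_le_mul_cond μ s t
      · exact Set.sdiff_subset_compl t s
    _ ≤ μ[t | s] + μ sᶜ := by gcongr; exact mul_le_of_le_one_left' prob_le_one

end ConditionalBound

theorem singlePathMP_correct_general [MeasurableSpace S] (M : MC S)
    (Pr : Measure (ℕ → S)) [IsProbabilityMeasure Pr]
    (Cand : (ℕ → S) → Set S) (MPhat : (ℕ → S) → ℝ) (MPC : Set S → ℝ)
    (δBSCC δC ε : ℝ) (hδB : 0 ≤ δBSCC) (hδC : 0 ≤ δC)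
    (h1 : Pr {ρ : ℕ → S | ¬ IsBSCCOf (edgeRel M) (Cand ρ)} ≤ ENNReal.ofReal δBSCC)
    (h2 : ProbabilityTheory.cond Pr {ρ : ℕ → S | IsBSCCOf (edgeRel M) (Cand ρ)}
            {ρ : ℕ → S | ε < |MPhat ρ - MPC (Cand ρ)|} ≤ ENNReal.ofReal δC) :
    Pr {ρ : ℕ → S | ε < |MPhat ρ - MPC (Cand ρ)|} ≤ ENNReal.ofReal (δC + δBSCC) := by
  calc Pr {ρ | ε < |MPhat ρ - MPC (Cand ρ)|}
      ≤ ProbabilityTheory.cond Pr {ρ | IsBSCCOf (edgeRel M) (Cand ρ)}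
            {ρ | ε < |MPhat ρ - MPC (Cand ρ)|}
          + Pr {ρ | IsBSCCOf (edgeRel M) (Cand ρ)}ᶜ :=
        measure_le_cond_add_measure_compl Pr _ _
    _ ≤ ENNReal.ofReal δC + ENNReal.ofReal δBSCC := add_le_add h2 h1
    _ = ENNReal.ofReal (δC + δBSCC) := (ENNReal.ofReal_add hδC hδB).symm

/-- Theorem 4 of the paper, correctness of `SinglePathMP`.  Let `Cand`
be the (random) candidate for which `SinglePathMP` terminates, `MPhat` its returned
estimate, and `MPC C` the mean payoff of runs ending in `C`.  If
`ℙ[Cand ∉ BSCC] ≤ δ_BSCC` and `ℙ[|MPhat − MP_Cand| > ε ∣ Cand ∈ BSCC] ≤ δ_C`, then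
`ℙ[|MPhat − MP_Cand| > ε] ≤ δ_C + δ_BSCC`; in particular with
`δ_C = δ_BSCC = δ/2` the output of `SinglePathMP` is within `ε` of the mean payoff of the
BSCC of the generated run with probability at least `1 − δ`. -/
theorem singlePathMP_correct [MeasurableSpace S] (M : MC S)
    (r : S → ℝ) (hr : ∀ s : S, r s ∈ Set.Icc (0 : ℝ) 1)
    (Pr : Measure (ℕ → S)) [IsProbabilityMeasure Pr]
    (hPr : ∀ π : List S, Pr (Cyl π) = ENNReal.ofReal (pathProb M π))
    (Cand : (ℕ → S) → Set S) (MPhat : (ℕ → S) → ℝ) (MPC : Set S → ℝ)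
    (δBSCC δC ε : ℝ) (hδB : 0 ≤ δBSCC) (hδC : 0 ≤ δC) (hε : 0 < ε)
    (h1 : Pr {ρ : ℕ → S | ¬ IsBSCCOf (edgeRel M) (Cand ρ)} ≤ ENNReal.ofReal δBSCC)
    (h2 : ProbabilityTheory.cond Pr {ρ : ℕ → S | IsBSCCOf (edgeRel M) (Cand ρ)}
            {ρ : ℕ → S | ε < |MPhat ρ - MPC (Cand ρ)|} ≤ ENNReal.ofReal δC) :
    Pr {ρ : ℕ → S | ε < |MPhat ρ - MPC (Cand ρ)|} ≤ ENNReal.ofReal (δC + δBSCC) :=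
  singlePathMP_correct_general M Pr Cand MPhat MPC δBSCC δC ε hδB hδC h1 h2

end SMCPaper
end

section
/- Let M = (S, P, μ) be a Markov chain and ρ a run of M. In the candidate sequence (K_i)_{i≥1} of ρ, each candidate K_{i+1} is either disjoint from K_i or strictly contains K_i together with further states; consequently, the candidate sequence of any run has length at most 2|S| − 1. -/
open MeasureTheory
open scoped ENNReal

namespace SMCPaper

variable {S : Type*} [Fintype S] [DecidableEq S]

/-!
A candidate is closed under the edges of its prefix, so once the run enters it, it stays there
up to that time; and the graph of a prefix only gains edges as the prefix grows. Hence a later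
candidate that meets an earlier one contains it. At a change point the inclusion is strict: were
the candidate equal to an earlier one, every candidate in between would be squeezed to that same
set. The candidates at the change points are therefore distinct nonempty sets forming a laminar
family, and a laminar family of nonempty subsets of an `n`-element set has at most `2n - 1`
members.
-/

section Laminar

variable {α : Type*}

def IsLaminar (F : Finset (Finset α)) : Prop :=
  ∀ A ∈ F, ∀ B ∈ F, A ⊆ B ∨ B ⊆ A ∨ Disjoint A B

theorem IsLaminar.mono {F G : Finset (Finset α)} (hF : IsLaminar F) (hGF : G ⊆ F) :
    IsLaminar G :=
  fun A hA B hB => hF A (hGF hA) B (hGF hB)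

theorem IsLaminar.card_le_of_forall_ssubset [DecidableEq α] {F : Finset (Finset α)}
    (hF : IsLaminar F) (hne : ∀ A ∈ F, A.Nonempty) {X : Finset α} (hX : ∀ A ∈ F, A ⊂ X) :
    F.card ≤ 2 * X.card - 2 := by
  induction X using Finset.strongInduction generalizing F with
  | H X ih =>
  rcases F.eq_empty_or_nonempty with rfl | hFne
  · simp
  -- Split `F` at a maximal member `M`: the rest lies strictly inside `M` or inside `X \ M`.
  obtain ⟨M, hMF, hMmax⟩ := Finset.exists_maximal hFne
  have hMX : M ⊂ X := hX M hMF
  set inner := F.filter (· ⊂ M)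
  set outer := F.filter (Disjoint · M)
  have hcover : F ⊆ insert M (inner ∪ outer) := by
    intro A hA
    simp only [Finset.mem_insert, Finset.mem_union, inner, outer, Finset.mem_filter]
    rcases hF A hA M hMF with hAM | hMA | hdisj
    · rcases hAM.eq_or_ssubset with rfl | hAM
      · exact Or.inl rfl
      · exact Or.inr (Or.inl ⟨hA, hAM⟩)
    · exact Or.inl ((hMmax hA hMA).antisymm hMA)
    · exact Or.inr (Or.inr ⟨hA, hdisj⟩)
  have hinner : inner.card ≤ 2 * M.card - 2 :=
    ih M hMX (hF.mono (Finset.filter_subset _ _)) (fun A hA => hne A (Finset.mem_filter.1 hA).1)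
      (fun A hA => (Finset.mem_filter.1 hA).2)
  have houter : (outer.erase (X \ M)).card ≤ 2 * (X \ M).card - 2 := by
    refine ih (X \ M) (Finset.sdiff_ssubset hMX.subset (hne M hMF))
      (hF.mono ((Finset.erase_subset _ _).trans (Finset.filter_subset _ _)))
      (fun A hA => hne A (Finset.mem_filter.1 (Finset.mem_of_mem_erase hA)).1) fun A hA => ?_
    obtain ⟨hAX, hA⟩ := Finset.mem_erase.1 hA
    obtain ⟨hAF, hAM⟩ := Finset.mem_filter.1 hA
    exact (Finset.subset_sdiff.2 ⟨(hX A hAF).subset, hAM⟩).ssubset_of_ne hAX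
  have hFcard : F.card ≤ inner.card + outer.card + 1 :=
    (Finset.card_le_card hcover).trans
      ((Finset.card_insert_le _ _).trans (Nat.add_le_add_right (Finset.card_union_le _ _) 1))
  have herase : outer.card - 1 ≤ (outer.erase (X \ M)).card := Finset.pred_card_le_card_erase
  have hMpos : 0 < M.card := (hne M hMF).card_pos
  have hXMpos : 0 < (X \ M).card := (Finset.sdiff_nonempty.2 hMX.not_subset).card_pos
  have hcard : (X \ M).card + M.card = X.card := Finset.card_sdiff_add_card_eq_card hMX.subset
  omega

theorem IsLaminar.card_le_of_forall_subset [DecidableEq α] {F : Finset (Finset α)}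
    (hF : IsLaminar F) (hne : ∀ A ∈ F, A.Nonempty) {X : Finset α} (hX : ∀ A ∈ F, A ⊆ X) :
    F.card ≤ 2 * X.card - 1 := by
  have herase := (hF.mono (Finset.erase_subset X F)).card_le_of_forall_ssubset
    (fun A hA => hne A (Finset.mem_of_mem_erase hA))
    (fun A hA => (hX A (Finset.mem_of_mem_erase hA)).ssubset_of_ne (Finset.ne_of_mem_erase hA))
  by_cases hXF : X ∈ F
  · have := (hne X hXF).card_pos
    have := Finset.card_erase_add_one hXF
    omega
  · rw [Finset.erase_eq_of_notMem hXF] at herase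
    omega

theorem finite_and_ncard_le_of_pairwise_laminar [Fintype α] {ι : Type*} {T : Set ι}
    {c : ι → Set α} (hne : ∀ i ∈ T, (c i).Nonempty)
    (hc : T.Pairwise fun i j => Disjoint (c i) (c j) ∨ c i ⊂ c j ∨ c j ⊂ c i) :
    T.Finite ∧ T.ncard ≤ 2 * Fintype.card α - 1 := by
  classical
  have hinj : T.InjOn c := by
    intro i hi j hj hij
    by_contra hne'
    rcases hc hi hj hne' with h | h | h <;> rw [hij] at h
    · exact (hne j hj).ne_empty (disjoint_self.1 h)
    · exact h.ne rfl
    · exact h.ne rfl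
  have hT : T.Finite := Set.Finite.of_finite_image (Set.toFinite _) hinj
  refine ⟨hT, ?_⟩
  have hcard : (hT.toFinset.image fun i => (c i).toFinset).card = T.ncard := by
    rw [Finset.card_image_of_injOn, Set.ncard_eq_toFinset_card T hT]
    intro i hi j hj hij
    exact hinj (hT.mem_toFinset.1 hi) (hT.mem_toFinset.1 hj) (Set.toFinset_inj.1 hij)
  rw [← hcard, ← Finset.card_univ]
  refine IsLaminar.card_le_of_forall_subset ?_ ?_ fun A _ => Finset.subset_univ A
  · simp only [IsLaminar, Finset.mem_image, Set.Finite.mem_toFinset]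
    rintro _ ⟨i, hi, rfl⟩ _ ⟨j, hj, rfl⟩
    rcases eq_or_ne i j with rfl | hij
    · exact Or.inl subset_rfl
    simp only [Set.toFinset_subset_toFinset, Set.disjoint_toFinset]
    rcases hc hi hj hij with h | h | h
    · exact Or.inr (Or.inr h)
    · exact Or.inl h.subset
    · exact Or.inr (Or.inl h.subset)
  · simp only [Finset.mem_image, Set.Finite.mem_toFinset]
    rintro _ ⟨i, hi, rfl⟩
    exact Set.toFinset_nonempty.2 (hne i hi)

end Laminar

section Candidates

variable {α : Type*} {ρ : ℕ → α} {C C' D : Set α} {j j' p : ℕ}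

theorem getElem?_pre_eq_some {n i : ℕ} {a : α} : (pre ρ n)[i]? = some a ↔ i < n ∧ ρ i = a := by
  by_cases h : i < n <;> simp [pre, h]

theorem listEdge_pre_iff {n : ℕ} {a b : α} :
    listEdge (pre ρ n) a b ↔ ∃ i, i + 1 < n ∧ ρ i = a ∧ ρ (i + 1) = b := by
  simp only [listEdge, getElem?_pre_eq_some]
  exact exists_congr fun i => ⟨fun ⟨⟨_, ha⟩, hn, hb⟩ => ⟨hn, ha, hb⟩,
    fun ⟨hn, ha, hb⟩ => ⟨⟨by omega, ha⟩, hn, hb⟩⟩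

theorem listEdge_pre_mono (h : j ≤ j') {a b : α} (hab : listEdge (pre ρ j) a b) :
    listEdge (pre ρ j') a b := by
  obtain ⟨i, hi, ha, hb⟩ := listEdge_pre_iff.1 hab
  exact listEdge_pre_iff.2 ⟨i, by omega, ha, hb⟩

theorem IsBSCCOf.mem_of_reflTransGen {E : α → α → Prop} (hC : IsBSCCOf E C) {a b : α}
    (hab : Relation.ReflTransGen E a b) (ha : a ∈ C) : b ∈ C := by
  induction hab with
  | refl => exact ha
  | tail _ hbc ih => exact hC.2.2 _ ih _ hbc

theorem IsCand.pre_last_mem (h : IsCand (pre ρ j) C) : 0 < j ∧ ρ (j - 1) ∈ C := by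
  obtain ⟨κ, ⟨t, ht⟩, rfl, ⟨⟨s, hs⟩, -⟩, -⟩ := h
  have hlen : t.length + κ.length = j := by simpa [pre] using congrArg List.length ht
  have hκ : 0 < κ.length := List.length_pos_of_mem hs
  refine ⟨by omega, ?_⟩
  have hlast : (t ++ κ)[j - 1]? = some (ρ (j - 1)) := by
    rw [ht]; exact getElem?_pre_eq_some.2 ⟨by omega, rfl⟩
  rw [List.getElem?_append_right (by omega)] at hlast
  exact List.mem_of_getElem? hlast

theorem IsCand.pre_exists_lt (h : IsCand (pre ρ j) C) {s : α} (hs : s ∈ C) :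
    ∃ p < j, ρ p = s := by
  obtain ⟨κ, hκ, rfl, -⟩ := h
  simpa [pre] using hκ.subset hs

theorem IsCand.pre_mem_of_le (h : IsCand (pre ρ j) C) (hp : ρ p ∈ C) {l : ℕ} (hpl : p ≤ l)
    (hlj : l < j) : ρ l ∈ C := by
  obtain ⟨-, -, -, hbscc⟩ := h
  induction l, hpl using Nat.le_induction with
  | base => exact hp
  | succ l _ ih => exact hbscc.2.2 _ (ih (by omega)) _ (listEdge_pre_iff.2 ⟨l, hlj, rfl, rfl⟩)

theorem IsCand.pre_subset (hjj : j ≤ j') (hC : IsCand (pre ρ j) C) (hC' : IsCand (pre ρ j') C')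
    (hCC' : (C ∩ C').Nonempty) : C ⊆ C' := by
  obtain ⟨s, hsC, hsC'⟩ := hCC'
  obtain ⟨hj, hlast⟩ := hC.pre_last_mem
  obtain ⟨p, hpj, rfl⟩ := hC.pre_exists_lt hsC
  have hlast' : ρ (j - 1) ∈ C' := hC'.pre_mem_of_le hsC' (by omega) (by omega)
  obtain ⟨-, -, -, hbscc⟩ := hC
  obtain ⟨-, -, -, hbscc'⟩ := hC'
  intro t ht
  exact hbscc'.mem_of_reflTransGen
    (Relation.ReflTransGen.mono (fun _ _ => listEdge_pre_mono hjj) _ _ (hbscc.1.2 _ hlast t ht))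
    hlast'

theorem IsCand.pre_eq_of_le_of_le (hjp : j ≤ p) (hpj : p ≤ j') (hC : IsCand (pre ρ j) C)
    (hD : IsCand (pre ρ p) D) (hC' : IsCand (pre ρ j') C) : D = C := by
  obtain ⟨hj, hlast⟩ := hC.pre_last_mem
  obtain ⟨hp, hlastD⟩ := hD.pre_last_mem
  have hlastC : ρ (p - 1) ∈ C := hC'.pre_mem_of_le hlast (by omega) (by omega)
  exact (hD.pre_subset hpj hC' ⟨_, hlastD, hlastC⟩).antisymm
    (hC.pre_subset hjp hD ⟨_, hlastC, hlastD⟩)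

theorem isCand_of_candOf_eq_some [Fintype α] {π : List α} (h : candOf π = some C) :
    IsCand π C := by
  unfold candOf at h
  split_ifs at h with hex
  exact Option.some_inj.1 h ▸ hex.choose_spec

theorem isChange.exists_ne_of_lt {f : ℕ → Option (Set α)} (hj' : isChange f j') (hjj : j < j')
    (hj : f j ≠ none) : ∃ p, j ≤ p ∧ p < j' ∧ f p ≠ none ∧ f p ≠ f j' := by
  classical
  set p := Nat.findGreatest (fun l => f l ≠ none) (j' - 1)
  have hjp : j ≤ p := Nat.le_findGreatest (by omega) hj
  have hpj : p < j' := by have := Nat.findGreatest_le (P := fun l => f l ≠ none) (j' - 1); omega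
  have hp : f p ≠ none := Nat.findGreatest_spec (P := fun l => f l ≠ none) (by omega) hj
  refine ⟨p, hjp, hpj, hp, hj'.2 p hpj hp fun l hpl hlj => ?_⟩
  simpa using Nat.findGreatest_is_greatest hpl (by omega)

theorem cpCount_mono (f : ℕ → Option (Set α)) : Monotone (cpCount f) :=
  fun _ _ h => Set.ncard_le_ncard (fun _ hl => ⟨hl.1.trans h, hl.2⟩)
    ((Set.finite_Iic _).subset fun _ hl => hl.1)

theorem disjoint_or_ssubset_of_isChange [Fintype α] (hj' : isChange (candSeqRaw ρ) j')
    (hjj : j < j') (hC : candSeqRaw ρ j = some C) (hC' : candSeqRaw ρ j' = some C') :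
    Disjoint C C' ∨ C ⊂ C' := by
  have hCc := isCand_of_candOf_eq_some hC
  have hCc' := isCand_of_candOf_eq_some hC'
  refine or_iff_not_imp_left.2 fun hCC' => (hCc.pre_subset hjj.le hCc'
    (Set.not_disjoint_iff_nonempty_inter.1 hCC')).ssubset_of_ne ?_
  rintro rfl
  obtain ⟨p, hjp, hpj, hp, hne⟩ := hj'.exists_ne_of_lt hjj (by simp [hC])
  obtain ⟨D, hD⟩ := Option.ne_none_iff_exists'.1 hp
  refine hne ?_
  rw [hD, hC', hCc.pre_eq_of_le_of_le hjp hpj.le (isCand_of_candOf_eq_some hD) hCc']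

end Candidates

theorem candidate_sequence_length_general (ρ : ℕ → S) :
    (∀ (i j j' : ℕ) (C C' : Set S), 1 ≤ i →
        isChange (candSeqRaw ρ) j → cpCount (candSeqRaw ρ) j = i →
        isChange (candSeqRaw ρ) j' → cpCount (candSeqRaw ρ) j' = i + 1 →
        candSeqRaw ρ j = some C → candSeqRaw ρ j' = some C' →
        (Disjoint C C' ∨ C ⊂ C')) ∧
      {j | isChange (candSeqRaw ρ) j}.Finite ∧
      {j | isChange (candSeqRaw ρ) j}.ncard ≤ 2 * Fintype.card S - 1 := by
  have hsome : ∀ {j}, isChange (candSeqRaw ρ) j → ∃ C, candSeqRaw ρ j = some C :=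
    fun hj => Option.ne_none_iff_exists'.1 hj.1
  refine ⟨fun i j j' C C' _ _ hcj hj' hcj' hC hC' => ?_,
    finite_and_ncard_le_of_pairwise_laminar (c := fun j => (candSeqRaw ρ j).getD ∅) ?_ ?_⟩
  · have hjj : j < j' := lt_of_not_ge fun h => by have := cpCount_mono (candSeqRaw ρ) h; omega
    exact disjoint_or_ssubset_of_isChange hj' hjj hC hC'
  · intro j hj
    obtain ⟨C, hC⟩ := hsome hj
    simpa [hC] using ⟨_, (isCand_of_candOf_eq_some hC).pre_last_mem.2⟩
  · intro j hj j' hj' hne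
    obtain ⟨C, hC⟩ := hsome hj
    obtain ⟨C', hC'⟩ := hsome hj'
    simp only [hC, hC', Option.getD_some]
    rcases hne.lt_or_gt with hjj | hjj
    · rcases disjoint_or_ssubset_of_isChange hj' hjj hC hC' with h | h
      · exact Or.inl h
      · exact Or.inr (Or.inl h)
    · rcases disjoint_or_ssubset_of_isChange hj hjj hC' hC with h | h
      · exact Or.inl h.symm
      · exact Or.inr (Or.inr h)

/-- Along any run `ρ` of `M`, each candidate `K_{i+1}` of the
candidate sequence is either disjoint from `K_i` or strictly contains `K_i`;
consequently the candidate sequence of a run (enumerated by the change points of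
`j ↦ K(s₀⋯s_{j-1})`) has length at most `2|S| − 1`. -/
theorem candidate_sequence_length (M : MC S) (ρ : ℕ → S) (hρ : IsRun M ρ) :
    (∀ (i j j' : ℕ) (C C' : Set S), 1 ≤ i →
        isChange (candSeqRaw ρ) j → cpCount (candSeqRaw ρ) j = i →
        isChange (candSeqRaw ρ) j' → cpCount (candSeqRaw ρ) j' = i + 1 →
        candSeqRaw ρ j = some C → candSeqRaw ρ j' = some C' →
        (Disjoint C C' ∨ C ⊂ C')) ∧
      {j | isChange (candSeqRaw ρ) j}.Finite ∧
      {j | isChange (candSeqRaw ρ) j}.ncard ≤ 2 * Fintype.card S - 1 :=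
  candidate_sequence_length_general ρ

end SMCPaper
end
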